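/- arXiv:1501.00743 — 4 statements merged into one kernel-verified Lean document; each statement's English description precedes it below -/
import Mathlib

section
/- Let G be the free product Z/2 * Z/q with q ≥ 4 even. Then G has infinitely many distinct normal subgroups of finite index that contain a nontrivial torsion element. -/
open Monoid

/-- A homomorphism from `Multiplicative (ZMod n)` to a group `D` determined by an element
`d : D` with `d ^ n = 1`. -/
private def zmodHom {D : Type*} [Group D] (n : ℕ) [NeZero n] (d : D) (h : d ^ n = 1) :
    Multiplicative (ZMod n) →* D :=
  MonoidHom.mk' (fun x => d ^ (Multiplicative.toAdd x).val) (by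
    intro a b
    show d ^ (Multiplicative.toAdd a + Multiplicative.toAdd b).val = _
    rw [ZMod.val_add, ← pow_eq_pow_mod _ h, pow_add])

private lemma zmodHom_apply {D : Type*} [Group D] (n : ℕ) [NeZero n] (d : D) (h : d ^ n = 1)
    (x : ZMod n) : zmodHom n d h (Multiplicative.ofAdd x) = d ^ x.val := rfl

theorem stmt_7 (q : ℕ) (hq : 4 ≤ q) (hq2 : Even q) :
    {N : Subgroup (Coprod (Multiplicative (ZMod 2)) (Multiplicative (ZMod q))) |
      N.Normal ∧ N.FiniteIndex ∧ ∃ x ∈ N, x ≠ 1 ∧ IsOfFinOrder x}.Infinite := by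
  have hq0 : q ≠ 0 := by omega
  haveI : NeZero q := ⟨hq0⟩
  -- the two "reflection" targets in the dihedral group
  have hsr0 : ∀ m : ℕ, (DihedralGroup.sr 0 : DihedralGroup m) ^ 2 = 1 := by
    intro m
    rw [pow_two, DihedralGroup.sr_mul_self]
  have hsr1 : ∀ m : ℕ, (DihedralGroup.sr 1 : DihedralGroup m) ^ q = 1 := by
    intro m
    obtain ⟨k, hk⟩ := hq2
    have : q = 2 * k := by omega
    rw [this, pow_mul, pow_two, DihedralGroup.sr_mul_self, one_pow]
  -- the homomorphism G → D_m
    -- S ↦ sr 0, R ↦ sr 1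
  set φ : (m : ℕ) →
      Coprod (Multiplicative (ZMod 2)) (Multiplicative (ZMod q)) →* DihedralGroup m :=
    fun m => Coprod.lift (zmodHom 2 (DihedralGroup.sr 0) (hsr0 m))
      (zmodHom q (DihedralGroup.sr 1) (hsr1 m)) with hφ
  -- value of φ on the element SR
  have hval1 : ((1 : ZMod q)).val = 1 := by
    have h' : ((1 : ℕ) : ZMod q) = (1 : ZMod q) := by push_cast; ring
    rw [← h', ZMod.val_cast_of_lt (by omega)]
  have key : ∀ m : ℕ, φ m (Coprod.inl (Multiplicative.ofAdd (1 : ZMod 2)) *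
      Coprod.inr (Multiplicative.ofAdd (1 : ZMod q))) = DihedralGroup.r 1 := by
    intro m
    rw [map_mul, hφ]
    simp only [Coprod.lift_apply_inl, Coprod.lift_apply_inr, zmodHom_apply]
    rw [hval1, show ((1 : ZMod 2)).val = 1 by decide]
    rw [pow_one, pow_one, DihedralGroup.sr_mul_sr, sub_zero]
  -- membership of powers of SR in the kernel detects m
  have hker : ∀ m : ℕ, 0 < m → ∀ k : ℕ,
      ((Coprod.inl (Multiplicative.ofAdd (1 : ZMod 2)) *
        Coprod.inr (Multiplicative.ofAdd (1 : ZMod q))) ^ k ∈ (φ m).ker ↔ m ∣ k) := by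
    intro m hm k
    haveI : NeZero m := ⟨hm.ne'⟩
    rw [MonoidHom.mem_ker, map_pow, key m, ← orderOf_dvd_iff_pow_eq_one,
      DihedralGroup.orderOf_r_one]
  -- the map n ↦ ker (φ (n+1)) is injective
  apply Set.infinite_of_injective_forall_mem
    (f := fun n : ℕ => (φ (n + 1)).ker)
  · intro a b hab
    simp only at hab
    by_contra hne
    have h1 : (a + 1) ∣ (a + 1) := dvd_refl _
    rw [← hker (a + 1) (by omega) (a + 1), hab, hker (b + 1) (by omega) (a + 1)] at h1
    have h2 : (b + 1) ∣ (b + 1) := dvd_refl _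
    rw [← hker (b + 1) (by omega) (b + 1), ← hab, hker (a + 1) (by omega) (b + 1)] at h2
    have := Nat.dvd_antisymm h1 h2
    omega
  · intro n
    haveI : NeZero (n + 1) := ⟨Nat.succ_ne_zero n⟩
    refine ⟨MonoidHom.normal_ker _, Subgroup.finiteIndex_ker _, ?_⟩
    -- the torsion element R²
    refine ⟨Coprod.inr (Multiplicative.ofAdd (2 : ZMod q)), ?_, ?_, ?_⟩
    · rw [MonoidHom.mem_ker, hφ]
      simp only [Coprod.lift_apply_inr, zmodHom_apply]
      have hv2 : ((2 : ZMod q)).val = 2 := by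
        have : ((2 : ℕ) : ZMod q) = (2 : ZMod q) := by push_cast; ring
        rw [← this, ZMod.val_cast_of_lt (by omega)]
      rw [hv2, pow_two, DihedralGroup.sr_mul_self]
    · intro h
      have := Coprod.inr_injective (M := Multiplicative (ZMod 2)) (h.trans (map_one _).symm)
      have h2 : (2 : ZMod q) = 0 := by
        have := congrArg Multiplicative.toAdd this
        simpa using this
      have hv2 : ((2 : ZMod q)).val = 2 := by
        have h' : ((2 : ℕ) : ZMod q) = (2 : ZMod q) := by push_cast; ring
        rw [← h', ZMod.val_cast_of_lt (by omega)]
      rw [h2, ZMod.val_zero] at hv2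
      omega
    · exact (Coprod.inr : Multiplicative (ZMod q) →*
        Coprod (Multiplicative (ZMod 2)) (Multiplicative (ZMod q))).isOfFinOrder
        (isOfFinOrder_of_finite _)
end

section
/- Let q ≥ 3 be prime and G = Z/2 * Z/q the free product with S of order 2 and R of order q. Then the only normal subgroups of finite index in G that contain a nontrivial torsion element are G itself, the normal closure of R (index 2), and the normal closure of S (index q). -/
/-!
If the first and last letters of a nonempty reduced word of a free product lie in different
factors, the reduced word of each power is a plain concatenation of copies, so the element has
infinite order. Otherwise conjugating by the last letter strictly shortens the reduced word; hence
every nontrivial torsion element is conjugate into a factor.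

In `Z/2 ∗ Z/q` a normal subgroup containing a nontrivial element of the factor `Z/2` (resp. `Z/q`)
contains its normal closure, which is the kernel of the projection onto `Z/q` (resp. `Z/2`). The
target having prime order, the subgroup is this kernel or the whole group.
-/

open Monoid

namespace Monoid.CoprodI.Word

variable {ι : Type*} {M : ι → Type*} [∀ i, Monoid (M i)] [DecidableEq ι] [∀ i, DecidableEq (M i)]

theorem toList_prod_smul (w₁ w₂ : Word M)
    (h : ∀ p ∈ w₁.toList.getLast?, w₂.fstIdx ≠ some p.1) :
    (w₁.prod • w₂).toList = w₁.toList ++ w₂.toList := by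
  induction w₁ using consRecOn with
  | empty => rw [prod_empty, one_smul]; rfl
  | cons i m w hw hm ih =>
    have ih' : (w.prod • w₂).toList = w.toList ++ w₂.toList :=
      ih fun p hp => h p (by rcases hwl : w.toList with _ | ⟨q, t⟩ <;> simp_all [cons])
    have hfst : (w.prod • w₂).fstIdx ≠ some i := by
      rcases hwl : w.toList with _ | ⟨p, t⟩
      · simpa [fstIdx, ih', hwl] using h ⟨i, m⟩ (by simp [cons, hwl])
      · simpa [fstIdx, ih', hwl] using hw
    rw [prod_cons, mul_smul, ← cons_eq_smul (h1 := hfst) (h2 := hm)]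
    simp [cons, ih']

theorem length_pow_smul_empty (w : Word M) (h : ∀ p ∈ w.toList.getLast?, w.fstIdx ≠ some p.1)
    (n : ℕ) : ((w.prod ^ n) • (empty : Word M)).toList.length = n * w.toList.length ∧
      ∀ p ∈ w.toList.getLast?, ((w.prod ^ n) • (empty : Word M)).fstIdx ≠ some p.1 := by
  induction n with
  | zero => simp [empty, fstIdx]
  | succ n ih =>
    rw [pow_succ', mul_smul, toList_prod_smul _ _ ih.2, List.length_append, ih.1]
    refine ⟨by ring, fun p hp => ?_⟩
    obtain ⟨q, t, hwt⟩ := List.exists_cons_of_ne_nil (List.ne_nil_of_mem (List.mem_of_getLast? hp))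
    simpa [fstIdx, toList_prod_smul _ _ ih.2, hwt] using h p hp

theorem not_isOfFinOrder_prod (w : Word M) (hw : w ≠ empty)
    (h : ∀ p ∈ w.toList.getLast?, w.fstIdx ≠ some p.1) : ¬IsOfFinOrder w.prod := by
  rw [isOfFinOrder_iff_pow_eq_one]
  rintro ⟨n, hn, hpow⟩
  have hlen := (length_pow_smul_empty w h n).1
  rw [hpow, one_smul] at hlen
  have : w.toList ≠ [] := fun hnil => hw (by cases w; simp_all [empty])
  simp_all [empty]

theorem length_of_smul_le {i : ι} (m : M i) {w : Word M} (hw : w.fstIdx = some i) :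
    (CoprodI.of m • w).toList.length ≤ w.toList.length := by
  set p := equivPair i w
  have hw' : rcons p = w := (equivPair i).symm_apply_apply w
  have hhead : p.head ≠ 1 := fun h1 => p.fstIdx_ne (by rwa [← hw', rcons, dif_pos h1] at hw)
  have hlen : w.toList.length = p.tail.toList.length + 1 := by
    rw [← hw', rcons, dif_neg hhead]; simp [cons]
  rw [of_smul_def, rcons, hlen]
  split <;> simp [cons, p]

end Monoid.CoprodI.Word

namespace Monoid.CoprodI

variable {ι : Type*} {G : ι → Type*} [∀ i, Group (G i)] [DecidableEq ι] [∀ i, DecidableEq (G i)]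

theorem exists_isConj_of_prod_of_isOfFinOrder (w : Word G) (h1 : w.prod ≠ 1)
    (hfin : IsOfFinOrder w.prod) : ∃ i, ∃ a : G i, IsConj (of a) w.prod := by
  obtain ⟨l, ⟨i, b⟩, hw⟩ := (List.eq_nil_or_concat' w.toList).resolve_left
    fun h => h1 (by simp [Word.prod, h])
  let u : Word G :=
    ⟨l, fun p hp => w.ne_one p (by simp [hw, hp]), (hw ▸ w.chain_ne).left_of_append⟩
  have hprod : w.prod = u.prod * of b := by simp [Word.prod, hw, u]
  rcases eq_or_ne l [] with hl | hl
  · have hu : u.prod = 1 := by simp [Word.prod, u, hl]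
    exact ⟨i, b, by rw [hprod, hu, one_mul]⟩
  have hfst : w.fstIdx = u.fstIdx := by
    obtain ⟨p, t, rfl⟩ := List.exists_cons_of_ne_nil hl
    simp [Word.fstIdx, hw, u]
  by_cases hcyc : w.fstIdx = some i
  swap
  · exact absurd hfin <| Word.not_isOfFinOrder_prod w (fun h => by simp [h, Word.empty] at hw)
      fun p hp => by
        simp only [hw, List.getLast?_concat, Option.mem_def, Option.some.injEq] at hp
        exact hp ▸ hcyc
  -- conjugating by `of b` moves the last letter to the front, where it merges with the first
  have hconj : IsConj (of b • u).prod w.prod :=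
    isConj_iff.2 ⟨(of b)⁻¹, by rw [Word.prod_smul, hprod]; group⟩
  obtain ⟨j, a, ha⟩ := exists_isConj_of_prod_of_isOfFinOrder (of b • u)
    (fun h => h1 (isConj_one_right.1 (h ▸ hconj))) (hconj.symm.isOfFinOrder hfin)
  exact ⟨j, a, ha.trans hconj⟩
termination_by w.toList.length
decreasing_by
  calc (of b • u).toList.length ≤ l.length := Word.length_of_smul_le b (hfst ▸ hcyc)
    _ < w.toList.length := by simp [hw]

theorem exists_isConj_of_of_isOfFinOrder {x : CoprodI G} (hx : x ≠ 1) (hfin : IsOfFinOrder x) :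
    ∃ i, ∃ a : G i, IsConj (of a) x := by
  obtain ⟨w, rfl⟩ : ∃ w : Word G, w.prod = x := ⟨_, Word.equiv.symm_apply_apply x⟩
  exact exists_isConj_of_prod_of_isOfFinOrder w hx hfin

end Monoid.CoprodI

namespace Subgroup

variable {A P : Type*} [Group A] [Group P]

theorem Normal.mem_of_isConj {N : Subgroup A} (hN : N.Normal) {a b : A} (h : IsConj a b)
    (hb : b ∈ N) : a ∈ N := by
  obtain ⟨c, rfl⟩ := isConj_iff.1 h
  simpa [mul_assoc] using hN.conj_mem' _ hb c

theorem normalClosure_range_eq_of_zpowers_eq_top (f : P →* A) {b : P} (hb : zpowers b = ⊤) :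
    normalClosure (Set.range f) = normalClosure {f b} := by
  rw [← MonoidHom.coe_range, MonoidHom.range_eq_map, ← hb, MonoidHom.map_zpowers,
    zpowers_eq_closure, normalClosure_closure_eq_normalClosure]

theorem eq_ker_or_eq_top_of_ker_le [Fact (Nat.card P).Prime] (φ : A →* P) {N : Subgroup A}
    (hker : φ.ker ≤ N) : N = φ.ker ∨ N = ⊤ := by
  rw [← comap_map_eq_self hker, ← MonoidHom.comap_bot]
  rcases (N.map φ).eq_bot_or_eq_top_of_prime_card with h | h <;> simp [h]

end Subgroup

namespace Monoid.Coprod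

open Subgroup

universe u

section

variable {G H : Type u} [Group G] [Group H]

instance instGroupCond (b : Bool) : Group (cond b G H) :=
  match b with
  | true => ‹Group G›
  | false => ‹Group H›

def equivCoprodI : G ∗ H ≃* CoprodI (fun b : Bool => cond b G H) :=
  MonoidHom.toMulEquiv
    (lift (CoprodI.of (M := fun b : Bool => cond b G H) (i := true))
      (CoprodI.of (M := fun b : Bool => cond b G H) (i := false)))
    (CoprodI.lift fun | true => inl | false => inr)
    (hom_ext (by ext; simp) (by ext; simp))
    (CoprodI.ext_hom _ _ fun | true => by ext; simp | false => by ext; simp)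

theorem exists_isConj_inl_or_inr_of_isOfFinOrder {x : G ∗ H} (hx : x ≠ 1)
    (hfin : IsOfFinOrder x) : (∃ a : G, IsConj (inl a) x) ∨ ∃ b : H, IsConj (inr b) x := by
  classical
  obtain ⟨i, a, ha⟩ := CoprodI.exists_isConj_of_of_isOfFinOrder
    (equivCoprodI.map_ne_one_iff.2 hx) (equivCoprodI.toMonoidHom.isOfFinOrder hfin)
  have hconj := equivCoprodI.symm.toMonoidHom.map_isConj ha
  simp only [MulEquiv.coe_toMonoidHom, MulEquiv.symm_apply_apply] at hconj
  cases i
  · exact .inr ⟨a, by simpa [equivCoprodI] using hconj⟩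
  · exact .inl ⟨a, by simpa [equivCoprodI] using hconj⟩

end

section

variable {G H : Type*} [Group G] [Group H]

theorem ker_snd : (snd : G ∗ H →* H).ker = normalClosure (Set.range inl) := by
  refine le_antisymm (fun x hx => ?_) (normalClosure_le_normal ?_)
  · let π := QuotientGroup.mk' (normalClosure (Set.range (inl : G →* G ∗ H)))
    have hπ : (π.comp inr).comp snd = π := hom_ext
      (MonoidHom.ext fun a => by
        simpa [π] using ((QuotientGroup.eq_one_iff _).2
          (subset_normalClosure (Set.mem_range_self (f := inl (N := H)) a))).symm) rfl
    simpa [π, MonoidHom.mem_ker.1 hx] using (DFunLike.congr_fun hπ x).symm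
  · rintro _ ⟨a, rfl⟩
    simp

theorem ker_fst : (fst : G ∗ H →* G).ker = normalClosure (Set.range inr) := by
  refine le_antisymm (fun x hx => ?_) (normalClosure_le_normal ?_)
  · let π := QuotientGroup.mk' (normalClosure (Set.range (inr : H →* G ∗ H)))
    have hπ : (π.comp inl).comp fst = π := hom_ext rfl
      (MonoidHom.ext fun b => by
        simpa [π] using ((QuotientGroup.eq_one_iff _).2
          (subset_normalClosure (Set.mem_range_self (f := inr (M := G)) b))).symm)
    simpa [π, MonoidHom.mem_ker.1 hx] using (DFunLike.congr_fun hπ x).symm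
  · rintro _ ⟨b, rfl⟩
    simp

theorem ker_snd_eq_normalClosure_inl [Fact (Nat.card G).Prime] {a : G} (ha : a ≠ 1) :
    (snd : G ∗ H →* H).ker = normalClosure {inl a} := by
  rw [ker_snd, normalClosure_range_eq_of_zpowers_eq_top _ (zpowers_eq_top_of_prime_card rfl ha)]

theorem ker_fst_eq_normalClosure_inr [Fact (Nat.card H).Prime] {b : H} (hb : b ≠ 1) :
    (fst : G ∗ H →* G).ker = normalClosure {inr b} := by
  rw [ker_fst, normalClosure_range_eq_of_zpowers_eq_top _ (zpowers_eq_top_of_prime_card rfl hb)]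

variable [Fact (Nat.card G).Prime] [Fact (Nat.card H).Prime] {N : Subgroup (G ∗ H)}

theorem eq_normalClosure_inl_or_eq_top_of_isConj (hN : N.Normal) {a : G} {x : G ∗ H}
    (hax : IsConj (inl a) x) (hx : x ≠ 1) (hxN : x ∈ N) {g : G} (hg : g ≠ 1) :
    N = normalClosure {inl g} ∨ N = ⊤ := by
  have ha : a ≠ 1 := by rintro rfl; exact hx (isConj_one_right.1 (by simpa using hax))
  rw [← ker_snd_eq_normalClosure_inl (H := H) hg]
  refine eq_ker_or_eq_top_of_ker_le (snd : G ∗ H →* H) ?_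
  rw [ker_snd_eq_normalClosure_inl ha]
  exact normalClosure_le_normal (Set.singleton_subset_iff.2 (hN.mem_of_isConj hax hxN))

theorem eq_normalClosure_inr_or_eq_top_of_isConj (hN : N.Normal) {b : H} {x : G ∗ H}
    (hbx : IsConj (inr b) x) (hx : x ≠ 1) (hxN : x ∈ N) {h : H} (hh : h ≠ 1) :
    N = normalClosure {inr h} ∨ N = ⊤ := by
  have hb : b ≠ 1 := by rintro rfl; exact hx (isConj_one_right.1 (by simpa using hbx))
  rw [← ker_fst_eq_normalClosure_inr (G := G) hh]
  refine eq_ker_or_eq_top_of_ker_le (fst : G ∗ H →* G) ?_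
  rw [ker_fst_eq_normalClosure_inr hb]
  exact normalClosure_le_normal (Set.singleton_subset_iff.2 (hN.mem_of_isConj hbx hxN))

end

end Monoid.Coprod

theorem stmt_11_general (q : ℕ) (hprime : q.Prime)
    (N : Subgroup (Coprod (Multiplicative (ZMod 2)) (Multiplicative (ZMod q))))
    (hN : N.Normal)
    (htor : ∃ x ∈ N, x ≠ 1 ∧ IsOfFinOrder x) :
    N = ⊤ ∨
    N = Subgroup.normalClosure {Coprod.inr (Multiplicative.ofAdd (1 : ZMod q))} ∨
    N = Subgroup.normalClosure {Coprod.inl (Multiplicative.ofAdd (1 : ZMod 2))} := by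
  have : Fact q.Prime := ⟨hprime⟩
  have : Fact (Nat.card (Multiplicative (ZMod 2))).Prime := ⟨by simpa using Nat.prime_two⟩
  have : Fact (Nat.card (Multiplicative (ZMod q))).Prime := ⟨by simpa using hprime⟩
  obtain ⟨x, hxN, hx1, hxfin⟩ := htor
  rcases Coprod.exists_isConj_inl_or_inr_of_isOfFinOrder hx1 hxfin with ⟨a, ha⟩ | ⟨b, hb⟩
  · exact (Coprod.eq_normalClosure_inl_or_eq_top_of_isConj hN ha hx1 hxN
      (g := Multiplicative.ofAdd 1) (by decide)).elim (.inr ∘ .inr) .inl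
  · exact (Coprod.eq_normalClosure_inr_or_eq_top_of_isConj hN hb hx1 hxN
      (h := Multiplicative.ofAdd 1) (by simp)).elim (.inr ∘ .inl) .inl

theorem stmt_11 (q : ℕ) (hq : 3 ≤ q) (hprime : q.Prime)
    (N : Subgroup (Coprod (Multiplicative (ZMod 2)) (Multiplicative (ZMod q))))
    (hN : N.Normal) (hfi : N.FiniteIndex)
    (htor : ∃ x ∈ N, x ≠ 1 ∧ IsOfFinOrder x) :
    N = ⊤ ∨
    N = Subgroup.normalClosure {Coprod.inr (Multiplicative.ofAdd (1 : ZMod q))} ∨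
    N = Subgroup.normalClosure {Coprod.inl (Multiplicative.ofAdd (1 : ZMod 2))} :=
  stmt_11_general q hprime N hN htor
end

section
/- In the symmetric group on 10 symbols {1,...,5,1',...,5'}, let r₁ = (1 1')(2 2')(3 3')(4 4')(5 5') and r₂ = (1 2 3 4 5). Then the centralizer of the subgroup ⟨r₁, r₂⟩ in the symmetric group is the cyclic group of order 5 generated by (1 2 3 4 5)(1' 2' 3' 4' 5'). -/
open Equiv

private abbrev r₁' : Perm (Fin 10) :=
  c[(0 : Fin 10), 5] * c[1, 6] * c[2, 7] * c[3, 8] * c[4, 9]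
private abbrev r₂' : Perm (Fin 10) := c[(0 : Fin 10), 1, 2, 3, 4]
private abbrev σ₀' : Perm (Fin 10) := c[(0 : Fin 10), 1, 2, 3, 4] * c[5, 6, 7, 8, 9]

private lemma key_aux (x : Perm (Fin 10)) (h1 : ∀ i, x (r₁' i) = r₁' (x i))
    (h2 : ∀ i, x (r₂' i) = r₂' (x i)) : x = σ₀' ^ (x 0).val := by
  have hlt : (x 0).val < 5 := by
    by_contra h
    have hfix : r₂' (x 0) = x 0 :=
      (show ∀ v : Fin 10, ¬ v.val < 5 → r₂' v = v by decide) _ h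
    have : x 1 = x 0 := by
      have := h2 0
      rwa [show r₂' (0 : Fin 10) = 1 by decide, hfix] at this
    exact absurd (x.injective this) (by decide)
  obtain ⟨v, hv⟩ : ∃ v, x 0 = v := ⟨x 0, rfl⟩
  rw [hv] at hlt ⊢
  have A1 : x 1 = r₂' v := by rw [show (1 : Fin 10) = r₂' 0 by decide, h2, hv]
  have A2 : x 2 = r₂' (r₂' v) := by rw [show (2 : Fin 10) = r₂' 1 by decide, h2, A1]
  have A3 : x 3 = r₂' (r₂' (r₂' v)) := by
    rw [show (3 : Fin 10) = r₂' 2 by decide, h2, A2]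
  have A4 : x 4 = r₂' (r₂' (r₂' (r₂' v))) := by
    rw [show (4 : Fin 10) = r₂' 3 by decide, h2, A3]
  have A5 : x 5 = r₁' v := by rw [show (5 : Fin 10) = r₁' 0 by decide, h1, hv]
  have A6 : x 6 = r₁' (r₂' v) := by rw [show (6 : Fin 10) = r₁' 1 by decide, h1, A1]
  have A7 : x 7 = r₁' (r₂' (r₂' v)) := by
    rw [show (7 : Fin 10) = r₁' 2 by decide, h1, A2]
  have A8 : x 8 = r₁' (r₂' (r₂' (r₂' v))) := by
    rw [show (8 : Fin 10) = r₁' 3 by decide, h1, A3]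
  have A9 : x 9 = r₁' (r₂' (r₂' (r₂' (r₂' v)))) := by
    rw [show (9 : Fin 10) = r₁' 4 by decide, h1, A4]
  fin_cases v <;>
    first
    | exact absurd hlt (by decide)
    | (ext i; fin_cases i <;>
        first
        | exact congrArg Fin.val (hv.trans (by decide))
        | exact congrArg Fin.val (A1.trans (by decide))
        | exact congrArg Fin.val (A2.trans (by decide))
        | exact congrArg Fin.val (A3.trans (by decide))
        | exact congrArg Fin.val (A4.trans (by decide))
        | exact congrArg Fin.val (A5.trans (by decide))
        | exact congrArg Fin.val (A6.trans (by decide))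
        | exact congrArg Fin.val (A7.trans (by decide))
        | exact congrArg Fin.val (A8.trans (by decide))
        | exact congrArg Fin.val (A9.trans (by decide)))

set_option maxRecDepth 8000 in
theorem stmt_14 :
    Subgroup.centralizer
        ((Subgroup.closure
          ({c[(0 : Fin 10), 5] * c[1, 6] * c[2, 7] * c[3, 8] * c[4, 9],
            c[(0 : Fin 10), 1, 2, 3, 4]} : Set (Equiv.Perm (Fin 10)))) :
              Set (Equiv.Perm (Fin 10))) =
      Subgroup.closure {c[(0 : Fin 10), 1, 2, 3, 4] * c[5, 6, 7, 8, 9]} ∧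
    Nat.card
      (Subgroup.closure ({c[(0 : Fin 10), 1, 2, 3, 4] * c[5, 6, 7, 8, 9]} :
        Set (Equiv.Perm (Fin 10)))) = 5 := by
  constructor
  · apply le_antisymm
    · intro x hx
      rw [Subgroup.mem_centralizer_iff] at hx
      have hm1 : r₁' * x = x * r₁' := hx r₁' (Subgroup.subset_closure (by left; rfl))
      have hm2 : r₂' * x = x * r₂' := hx r₂' (Subgroup.subset_closure (by right; rfl))
      have h1 : ∀ i, x (r₁' i) = r₁' (x i) := fun i => (Perm.mul_apply ..).symm.trans
        ((congrArg (fun p : Perm (Fin 10) => p i) hm1).symm.trans (Perm.mul_apply ..))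
      have h2 : ∀ i, x (r₂' i) = r₂' (x i) := fun i => (Perm.mul_apply ..).symm.trans
        ((congrArg (fun p : Perm (Fin 10) => p i) hm2).symm.trans (Perm.mul_apply ..))
      rw [key_aux x h1 h2]
      exact pow_mem (Subgroup.subset_closure (Set.mem_singleton σ₀')) _
    · rw [Subgroup.closure_le, Set.singleton_subset_iff]
      rw [SetLike.mem_coe, Subgroup.mem_centralizer_iff]
      intro g hg
      induction hg using Subgroup.closure_induction with
      | mem g hg =>
        rcases hg with h | h
        · rw [h]; decide
        · rw [h]; decide
      | one => exact Commute.one_left _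
      | mul a b _ _ ha hb => exact Commute.mul_left ha hb
      | inv a _ ha => exact Commute.inv_left ha
  · haveI : Fact (Nat.Prime 5) := ⟨by norm_num⟩
    rw [← Subgroup.zpowers_eq_closure, Nat.card_zpowers]
    exact orderOf_eq_prime (by decide) (by decide)
end

section
/- In the symmetric group on 11 symbols {1,...,7,1',2',3',4'}, let T = (1' 2' 3' 4' 4 7 3 6 2 5 1) and U = (1' 5 2' 6 3' 7 4' 4 3 2 1). Then the subgroup generated by T and U is isomorphic to the alternating group A₁₁. -/
set_option maxRecDepth 40000
set_option maxHeartbeats 2000000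

open Equiv

private def Tg : Perm (Fin 11) := c[(7 : Fin 11), 8, 9, 10, 3, 6, 2, 5, 1, 4, 0]
private def Ug : Perm (Fin 11) := c[(7 : Fin 11), 4, 8, 5, 9, 6, 10, 3, 2, 1, 0]

private def g : Fin 4 → Perm (Fin 11)
  | 0 => Tg | 1 => Tg⁻¹ | 2 => Ug | 3 => Ug⁻¹

private def L : Nat → Nat → List (Fin 4)
  | 1, 2 => [1, 1, 1, 1, 3, 3, 3, 1, 3, 1, 3, 1, 3, 3, 3, 0, 0, 0, 0, 0]
  | 1, 3 => [1, 1, 1, 3, 1, 1, 3, 3, 1, 3, 1, 3, 1, 3, 3, 3, 3, 3, 0, 0, 0, 0]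
  | 1, 4 => [3, 3, 1, 1, 1, 3, 1, 1, 3, 1, 3, 1, 3, 1, 1, 1, 3, 3, 3, 1, 3, 0]
  | 1, 5 => [0, 0, 2, 0, 0, 2, 0, 0, 2, 0, 2, 0, 2, 0, 0, 0, 2, 2, 2, 1, 1, 1]
  | 1, 6 => [1, 1, 3, 3, 3, 1, 3, 1, 3, 1, 3, 3, 1, 1, 1, 3, 1, 3, 1, 3]
  | 1, 7 => [0, 2, 2, 2, 0, 0, 0, 2, 0, 2, 0, 2, 0, 0, 2, 0, 0, 2, 1, 1]
  | 1, 8 => [1, 1, 3, 3, 3, 1, 3, 1, 3, 1, 3, 3, 3, 0, 0, 0]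
  | 1, 9 => [1, 3, 1, 3, 3, 1, 1, 3, 1, 1, 3, 3, 1, 3, 3, 1, 1, 3, 1, 1, 3, 0]
  | 1, 10 => [2, 2, 0, 0, 2, 0, 0, 2, 0, 2, 0, 2, 0, 0, 0, 2, 2, 0, 2, 1]
  | 2, 1 => [1, 1, 1, 1, 3, 1, 1, 3, 1, 3, 1, 3, 1, 1, 3, 0, 0, 0, 0, 0]
  | 2, 3 => [0, 0, 0, 2, 0, 0, 0, 0, 2, 0, 2, 0, 2, 0, 0, 2, 2, 2, 1, 1, 1, 1]
  | 2, 4 => [2, 0, 2, 2, 0, 2, 0, 2, 0, 2, 2, 2, 2, 1]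
  | 2, 5 => [0, 2, 2, 2, 2, 0, 2, 0, 2, 0, 2, 2, 0, 2, 1, 1]
  | 2, 6 => [2, 0, 2, 0, 0, 0, 0, 2, 0, 2, 0, 2, 0, 0, 2, 2, 0, 2, 2, 1]
  | 2, 7 => [0, 2, 2, 0, 2, 2, 0, 0, 2, 0, 2, 0, 2, 0, 0, 0, 0, 2, 0, 2, 1, 1]
  | 2, 8 => [1, 3, 1, 1, 3, 3, 1, 3, 1, 3, 1, 3, 3, 3, 3, 3, 0, 0]
  | 2, 9 => [0, 0, 0, 2, 2, 0, 2, 0, 2, 2, 0, 0, 0, 0, 0]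
  | 2, 10 => [1, 1, 1, 3, 1, 3, 1, 3, 1, 3, 0, 0]
  | 3, 1 => [1, 1, 1, 3, 1, 1, 1, 1, 3, 1, 3, 1, 3, 1, 1, 3, 3, 3, 0, 0, 0, 0]
  | 3, 2 => [0, 0, 0, 2, 0, 0, 2, 2, 0, 2, 0, 2, 0, 2, 2, 2, 2, 2, 1, 1, 1, 1]
  | 3, 4 => [1, 3, 3, 1, 3, 3, 1, 1, 3, 1, 1, 3, 3, 1, 3, 3, 1, 1, 3, 1]
  | 3, 5 => [2, 2, 2, 2, 0, 0, 2, 0, 2, 0, 0, 2, 2, 2, 2]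
  | 3, 6 => [1, 3, 1, 1, 3, 3, 1, 3, 3, 1, 1, 3, 1, 1, 3, 3, 1, 3, 3, 1]
  | 3, 7 => [0, 2, 0, 2, 2, 2, 2, 0, 0, 2, 0, 2, 0, 0, 2, 2, 2, 0, 2, 1, 1]
  | 3, 8 => [1, 1, 3, 1, 3, 3, 1, 1, 3, 1, 3, 1, 3, 1, 1, 1, 1, 3, 3, 0, 0, 0]
  | 3, 9 => [1, 3, 1, 1, 3, 1, 1, 3, 3, 1, 3, 3, 1, 1, 3, 1, 1, 3, 3, 1, 3, 0]
  | 3, 10 => [1, 3, 3, 1, 1, 1, 3, 3, 1, 3, 1, 3, 3, 1, 1, 1, 1, 3, 3, 0, 0]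
  | 4, 1 => [3, 3, 1, 1, 1, 3, 3, 3, 1, 3, 1, 3, 1, 3, 3, 1, 3, 3, 3, 1, 3, 0]
  | 4, 2 => [2, 0, 0, 0, 2, 0, 2, 0, 2, 0, 0, 2, 2, 1]
  | 4, 3 => [0, 2, 0, 0, 2, 2, 0, 2, 2, 0, 0, 2, 0, 0, 2, 2, 0, 2, 2, 0]
  | 4, 5 => [2, 2, 2, 0, 0, 0, 2, 0, 2, 0, 2, 0, 0, 2, 0, 0, 2, 1]
  | 4, 6 => [2, 2, 0, 2, 2, 0, 0, 2, 0, 2, 0, 2, 0, 0, 0, 0, 2, 0, 2, 1]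
  | 4, 7 => [1, 3, 1, 1, 1, 3, 1, 1, 3, 1, 3, 1, 3, 1, 1, 1, 3, 3, 3, 3, 0, 0]
  | 4, 8 => [1, 3, 1, 1, 3, 1, 1, 1, 1, 3, 1, 3, 1, 3, 1, 1, 3, 3, 1, 3, 3, 3, 0, 0]
  | 4, 9 => [2, 0, 0, 2, 2, 2, 2, 0, 2, 0, 2, 0, 2, 2, 0, 0, 2, 2, 2, 1]
  | 4, 10 => [2, 0, 2, 2, 2, 2, 0, 0, 2, 0, 2, 0, 0, 2, 2, 2, 0, 2, 1]
  | 5, 1 => [2, 2, 0, 0, 2, 2, 2, 0, 2, 0, 2, 0, 2, 2, 0, 0, 0, 2, 2, 1, 1, 1]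
  | 5, 2 => [0, 2, 2, 0, 0, 2, 0, 2, 0, 2, 0, 0, 0, 2, 1, 1]
  | 5, 3 => [3, 3, 3, 3, 1, 1, 3, 1, 3, 1, 1, 3, 3, 3, 3]
  | 5, 4 => [2, 2, 2, 0, 2, 2, 0, 2, 0, 2, 0, 2, 2, 2, 0, 0, 2, 1]
  | 5, 6 => [2, 2, 0, 2, 0, 2, 2, 2, 0, 0, 2, 0, 2, 0, 2, 0, 0, 2, 1, 1, 1, 1]
  | 5, 7 => [3, 1, 3, 1, 1, 3, 1, 3, 1, 3, 1, 1, 1, 3, 3, 0]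
  | 5, 8 => [3, 3, 1, 1, 1, 1, 3, 1, 3, 1, 3, 1, 1, 3, 3, 1, 3, 0]
  | 5, 9 => [0, 0, 2, 0, 0, 0, 2, 2, 0, 2, 0, 2, 2, 0, 0, 0, 2, 1, 1, 1, 1]
  | 5, 10 => [0, 3, 1, 3, 1, 3, 1, 3, 1, 1]
  | 6, 1 => [2, 0, 2, 0, 2, 0, 0, 0, 2, 2, 0, 2, 0, 2, 0, 2, 2, 2, 0, 0]
  | 6, 2 => [2, 0, 2, 0, 0, 2, 2, 0, 2, 0, 2, 0, 2, 2, 2, 2, 0, 2, 2, 1]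
  | 6, 3 => [0, 2, 2, 0, 2, 2, 0, 0, 2, 0, 0, 2, 2, 0, 2, 2, 0, 0, 2, 0]
  | 6, 4 => [2, 2, 0, 2, 2, 2, 2, 0, 2, 0, 2, 0, 2, 2, 0, 0, 2, 0, 2, 1]
  | 6, 5 => [0, 0, 0, 2, 2, 2, 0, 2, 0, 2, 0, 2, 2, 0, 0, 0, 2, 0, 2, 0, 2, 1]
  | 6, 7 => [0, 0, 2, 0, 0, 2, 2, 0, 2, 2, 0, 0, 2, 0, 0, 2, 2, 0, 2, 2]
  | 6, 8 => [3, 1, 1, 1, 1, 3, 3, 1, 3, 1, 3, 3, 1, 1, 3, 0, 0]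
  | 6, 9 => [0, 2, 2, 0, 0, 2, 0, 0, 2, 2, 0, 2, 2, 0, 0, 2, 0, 0, 2, 2]
  | 6, 10 => [0, 0, 2, 2, 2, 0, 0, 2, 0, 2, 0, 0, 2, 2, 2, 2, 2, 1, 1]
  | 7, 1 => [0, 2, 2, 2, 0, 2, 2, 0, 2, 0, 2, 0, 2, 2, 2, 0, 0, 2, 1, 1]
  | 7, 2 => [0, 2, 2, 0, 2, 2, 2, 2, 0, 2, 0, 2, 0, 2, 2, 0, 0, 2, 0, 2, 1, 1]
  | 7, 3 => [0, 2, 2, 0, 0, 0, 2, 2, 0, 2, 0, 2, 2, 0, 0, 0, 0, 2, 2, 1, 1]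
  | 7, 4 => [1, 3, 1, 1, 1, 3, 3, 3, 1, 3, 1, 3, 1, 3, 3, 1, 3, 3, 3, 3, 0, 0]
  | 7, 5 => [3, 1, 3, 3, 3, 1, 3, 1, 3, 1, 3, 3, 1, 3, 3, 0]
  | 7, 6 => [3, 3, 1, 3, 3, 1, 1, 3, 1, 1, 3, 3, 1, 3, 3, 1, 1, 3, 1, 1]
  | 7, 8 => [3, 1, 1, 1, 3, 3, 3, 1, 3, 1, 3, 1, 3, 3, 1, 3, 3, 3, 3, 0]
  | 7, 9 => [3, 1, 1, 3, 1, 1, 3, 3, 1, 3, 1, 3, 1, 3, 3, 3, 3, 1, 3, 3, 3, 0]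
  | 7, 10 => [3, 1, 3, 1, 1, 1, 1, 3, 3, 1, 3, 1, 3, 3, 1, 1, 1, 3, 3, 3, 0]
  | 8, 1 => [1, 1, 3, 1, 1, 3, 1, 3, 1, 3, 1, 1, 3, 0, 0, 0]
  | 8, 2 => [1, 3, 1, 1, 1, 1, 3, 1, 3, 1, 3, 1, 1, 3, 3, 3, 0, 0]
  | 8, 3 => [1, 1, 3, 1, 3, 3, 3, 3, 1, 3, 1, 3, 1, 3, 3, 1, 1, 3, 3, 0, 0, 0]
  | 8, 4 => [1, 3, 1, 1, 3, 1, 1, 3, 3, 1, 3, 1, 3, 1, 3, 3, 3, 3, 1, 3, 3, 3, 0, 0]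
  | 8, 5 => [3, 3, 1, 1, 3, 3, 1, 3, 1, 3, 1, 3, 3, 3, 3, 1, 3, 0]
  | 8, 6 => [1, 3, 3, 3, 1, 1, 3, 1, 3, 1, 1, 3, 3, 3, 3, 3, 0]
  | 8, 7 => [3, 1, 1, 1, 3, 1, 1, 3, 1, 3, 1, 3, 1, 1, 1, 3, 3, 3, 3, 0]
  | 8, 9 => [1, 3, 3, 3, 1, 1, 3, 3, 3, 1, 3, 3, 3, 1, 1, 3, 3, 3, 1, 3, 1, 1, 3]
  | 8, 10 => [3, 1, 1, 3, 1, 3, 1, 3, 1, 1, 3, 0]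
  | 9, 1 => [3, 3, 3, 1, 3, 3, 1, 1, 3, 1, 1, 3, 3, 1, 3, 3, 1, 1, 3, 3, 0, 0]
  | 9, 2 => [1, 1, 1, 1, 1, 3, 3, 1, 3, 1, 3, 3, 1, 1, 1]
  | 9, 3 => [3, 3, 1, 1, 3, 3, 1, 3, 3, 1, 1, 3, 1, 1, 3, 3, 1, 3, 3, 3, 0, 0]
  | 9, 4 => [2, 0, 0, 2, 2, 0, 0, 2, 0, 2, 0, 2, 0, 0, 0, 0, 2, 2, 2, 1]
  | 9, 5 => [0, 0, 0, 2, 2, 2, 2, 0, 0, 2, 0, 2, 0, 0, 2, 2, 2, 2, 1, 1, 1]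
  | 9, 6 => [3, 3, 1, 1, 3, 1, 1, 3, 3, 1, 3, 3, 1, 1, 3, 1, 1, 3, 3, 1]
  | 9, 7 => [3, 1, 1, 3, 1, 1, 1, 1, 3, 1, 3, 1, 3, 1, 1, 3, 3, 1, 3, 3, 3, 0]
  | 9, 8 => [2, 0, 0, 2, 0, 2, 2, 2, 0, 0, 2, 2, 2, 0, 2, 2, 2, 0, 0, 2, 2, 2, 0]
  | 9, 10 => [0, 0, 2, 2, 0, 0, 0, 2, 0, 2, 0, 2, 0, 0, 2, 0, 2, 1, 1, 1]
  | 10, 1 => [2, 2, 0, 0, 2, 2, 2, 0, 2, 0, 2, 0, 2, 2, 0, 2, 2, 0, 2, 1]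
  | 10, 2 => [1, 1, 2, 0, 2, 0, 2, 0, 2, 0, 0, 0]
  | 10, 3 => [1, 3, 1, 3, 3, 3, 3, 1, 1, 3, 1, 3, 1, 1, 3, 3, 3, 1, 3, 0, 0]
  | 10, 4 => [2, 2, 0, 0, 0, 2, 2, 0, 2, 0, 2, 2, 0, 0, 0, 0, 2, 2, 1]
  | 10, 5 => [0, 0, 2, 0, 2, 0, 2, 0, 2, 1]
  | 10, 6 => [0, 2, 0, 0, 0, 0, 2, 2, 0, 2, 0, 2, 2, 0, 0, 2, 1, 1, 1]
  | 10, 7 => [3, 1, 1, 3, 3, 3, 1, 1, 3, 1, 3, 1, 1, 3, 3, 3, 3, 1, 3, 3, 0]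
  | 10, 8 => [3, 3, 3, 1, 3, 1, 3, 1, 3, 3, 3, 0]
  | 10, 9 => [0, 0, 2, 2, 0, 2, 2, 0, 2, 0, 2, 0, 2, 2, 2, 0, 2, 1, 1, 1]
  | _, _ => []

private def H : Subgroup (Perm (Fin 11)) := Subgroup.closure {Tg, Ug}

private lemma hTg : Tg ∈ H := Subgroup.subset_closure (Or.inl rfl)
private lemma hUg : Ug ∈ H := Subgroup.subset_closure (Or.inr rfl)

private lemma g_mem : ∀ i : Fin 4, g i ∈ H := by
  intro i
  fin_cases i
  · exact hTg
  · exact inv_mem hTg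
  · exact hUg
  · exact inv_mem hUg

private lemma table_correct : ∀ y z : Fin 11, y ≠ 0 → z ≠ 0 → y ≠ z →
    ((L y.val z.val).map g).prod = swap 0 y * swap y z := by decide

private lemma base (y z : Fin 11) (hy : y ≠ 0) (hz : z ≠ 0) (hyz : y ≠ z) :
    swap 0 y * swap y z ∈ H := by
  rw [← table_correct y z hy hz hyz]
  refine Subgroup.list_prod_mem _ ?_
  intro p hp
  obtain ⟨i, _, rfl⟩ := List.mem_map.1 hp
  exact g_mem i

private lemma exists_pow : ∀ x : Fin 11, ∃ k : Fin 11, (Tg ^ (k : ℕ)) x = 0 := by decide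

private lemma key (x y z : Fin 11) (hxy : x ≠ y) (hyz : y ≠ z) (hxz : x ≠ z) :
    swap x y * swap y z ∈ H := by
  obtain ⟨k, hk⟩ := exists_pow x
  set f : Perm (Fin 11) := Tg ^ (k : ℕ) with hf
  have hfH : f ∈ H := pow_mem hTg _
  have h2 : f * (swap x y * swap y z) * f⁻¹ = swap 0 (f y) * swap (f y) (f z) := by
    rw [← hk, swap_apply_apply f x y, swap_apply_apply f y z]
    group
  have h3 : swap x y * swap y z = f⁻¹ * (f * (swap x y * swap y z) * f⁻¹) * f := by group
  rw [h3, h2]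
  refine mul_mem (mul_mem (inv_mem hfH) (base _ _ ?_ ?_ ?_)) hfH
  · rw [← hk]; exact fun h => hxy (f.injective h).symm
  · rw [← hk]; exact fun h => hxz (f.injective h).symm
  · exact fun h => hyz (f.injective h)

private lemma threeCycle_mem {σ : Perm (Fin 11)} (h : σ.IsThreeCycle) : σ ∈ H := by
  obtain ⟨x, hx⟩ : σ.support.Nonempty := by
    rw [← Finset.card_pos, h.card_support]; norm_num
  have hx' : σ x ≠ x := Perm.mem_support.1 hx
  have ho : σ ^ 3 = 1 := by
    have := h.orderOf
    rw [← this]; exact pow_orderOf_eq_one σ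
  have hσσx : σ (σ (σ x)) = x := by
    have h1 : (σ ^ 3) x = x := by rw [ho]; rfl
    exact h1
  have hsx : σ (σ x) ≠ x := by
    intro hc
    exact hx' ((congrArg σ hc).symm.trans hσσx)
  have hsx' : σ (σ x) ≠ σ x := fun hc => hx' (σ.injective hc)
  have hsupp : σ.support = {x, σ x, σ (σ x)} := by
    apply Finset.eq_of_superset_of_card_ge
    · intro w hw
      simp only [Finset.mem_insert, Finset.mem_singleton] at hw
      rcases hw with rfl | rfl | rfl
      · exact hx
      · exact Perm.apply_mem_support.2 hx
      · exact Perm.apply_mem_support.2 (Perm.apply_mem_support.2 hx)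
    · rw [h.card_support]
      have : ({x, σ x, σ (σ x)} : Finset (Fin 11)).card = 3 := by
        rw [Finset.card_insert_of_notMem, Finset.card_insert_of_notMem,
          Finset.card_singleton]
        · simpa using hsx'.symm
        · simp only [Finset.mem_insert, Finset.mem_singleton]
          push_neg
          exact ⟨Ne.symm hx', fun hc => hsx hc.symm⟩
      omega
  have hσeq : σ = swap x (σ x) * swap (σ x) (σ (σ x)) := by
    ext w
    by_cases hw : w ∈ σ.support
    · rw [hsupp] at hw
      simp only [Finset.mem_insert, Finset.mem_singleton] at hw
      rcases hw with rfl | rfl | rfl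
      · simp only [Perm.mul_apply]
        rw [swap_apply_of_ne_of_ne (Ne.symm hx') (Ne.symm hsx), swap_apply_left]
      · simp only [Perm.mul_apply]
        rw [swap_apply_left, swap_apply_of_ne_of_ne hsx hsx']
      · simp only [Perm.mul_apply]
        rw [swap_apply_right, swap_apply_right, hσσx]
    · have hww : σ w = w := Perm.notMem_support.1 hw
      rw [hsupp] at hw
      simp only [Finset.mem_insert, Finset.mem_singleton] at hw
      push_neg at hw
      obtain ⟨h1, h2, h3⟩ := hw
      simp only [Perm.mul_apply]
      rw [swap_apply_of_ne_of_ne h2 h3, swap_apply_of_ne_of_ne h1 h2, hww]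
  rw [hσeq]
  exact key _ _ _ (Ne.symm hx') (Ne.symm hsx') (Ne.symm hsx)

private lemma upper : H ≤ alternatingGroup (Fin 11) := by
  rw [H, Subgroup.closure_le]
  rintro p (rfl | rfl)
  · rw [SetLike.mem_coe, Equiv.Perm.mem_alternatingGroup]; decide
  · rw [SetLike.mem_coe, Equiv.Perm.mem_alternatingGroup]; decide

private lemma lower : alternatingGroup (Fin 11) ≤ H := by
  rw [← Equiv.Perm.closure_three_cycles_eq_alternating, Subgroup.closure_le]
  intro σ hσ
  exact threeCycle_mem hσ

private lemma main : H = alternatingGroup (Fin 11) := le_antisymm upper lower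

theorem stmt_15 :
    Nonempty
      ((Subgroup.closure
        ({c[(7 : Fin 11), 8, 9, 10, 3, 6, 2, 5, 1, 4, 0],
          c[(7 : Fin 11), 4, 8, 5, 9, 6, 10, 3, 2, 1, 0]} : Set (Equiv.Perm (Fin 11)))) ≃*
        alternatingGroup (Fin 11)) := by
  exact ⟨MulEquiv.subgroupCongr main⟩
end
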